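/- arXiv:2205.10424 — 4 statements merged into one kernel-verified Lean document; each statement's English description precedes it below -/
import Mathlib

section
/- Let n ≥ 1 and let v : Fin(n+2) → ℝ^n be a family of points such that the subfamily of v indexed by {0, 1, …, n} (omitting the last index) is affinely independent and the subfamily indexed by {1, …, n+1} (omitting index 0) is affinely independent. Then there exists exactly one subset Z ⊆ Fin(n+2) such that the subfamily of v indexed by Z is affinely dependent and, for every proper subset Z' ⊊ Z, the subfamily of v indexed by Z' is affinely independent. -/
open Finset

section aux

variable {n m : ℕ} {v : Fin m → (Fin n → ℝ)}

private lemma aux_sum_subtype {M : Type*} [AddCommMonoid M] {P : Fin m → Prop}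
    [DecidablePred P] (f : Fin m → M) (hf : ∀ j, ¬ P j → f j = 0) :
    (∑ i : {j : Fin m // P j}, f i) = ∑ j, f j := by
  rw [← Finset.sum_subtype (Finset.univ.filter P) (by simp) f]
  exact Finset.sum_subset (Finset.filter_subset _ _) (by
    intro x _ hx
    exact hf x (by simpa using hx))

/-- If the subfamily indexed by a predicate `P` is affinely independent and `W` is a global
affine dependency supported on `P`, then `W = 0`. -/
private lemma aux_indep_zero {P : Fin m → Prop} [DecidablePred P]
    (h : AffineIndependent ℝ (fun i : {j : Fin m // P j} => v i))
    (W : Fin m → ℝ) (hsupp : ∀ j, ¬ P j → W j = 0)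
    (h0 : ∑ j, W j = 0) (h1 : ∑ j, W j • v j = 0) : W = 0 := by
  have hw0 : ∑ i : {j : Fin m // P j}, W i = 0 := by
    rw [aux_sum_subtype W hsupp]; exact h0
  have hw1 : ∑ i : {j : Fin m // P j}, W i • v i = 0 := by
    rw [aux_sum_subtype (fun j => W j • v j) (fun j hj => by simp [hsupp j hj])]
    exact h1
  have := affineIndependent_iff.1 h Finset.univ (fun i => W i) (by simpa using hw0)
    (by simpa using hw1)
  funext j
  by_cases hj : P j
  · exact this ⟨j, hj⟩ (Finset.mem_univ _)
  · exact hsupp j hj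

/-- From a dependent subfamily indexed by a set `Z`, extract a nonzero global dependency
supported on `Z`. -/
private lemma aux_dep_weights (Z : Set (Fin m))
    (h : ¬ AffineIndependent ℝ (fun i : Z => v i)) :
    ∃ W : Fin m → ℝ, (∀ j, j ∉ Z → W j = 0) ∧ ∑ j, W j = 0 ∧ ∑ j, W j • v j = 0 ∧ W ≠ 0 := by
  classical
  rw [affineIndependent_iff] at h
  push_neg at h
  obtain ⟨s, w, hw0, hw1, e, hes, hwe⟩ := h
  refine ⟨fun j => ∑ i ∈ s, if (i : Fin m) = j then w i else 0, ?_, ?_, ?_, ?_⟩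
  · intro j hj
    refine Finset.sum_eq_zero fun i _ => ?_
    rw [if_neg]
    exact fun hij => hj (hij ▸ i.2)
  · rw [Finset.sum_comm]
    simpa using hw0
  · calc ∑ j, (∑ i ∈ s, if (i : Fin m) = j then w i else 0) • v j
        = ∑ j, ∑ i ∈ s, (if (i : Fin m) = j then w i • v j else 0) := by
          refine Finset.sum_congr rfl fun j _ => ?_
          rw [Finset.sum_smul]
          exact Finset.sum_congr rfl fun i _ => by split <;> simp
      _ = ∑ i ∈ s, ∑ j, (if (i : Fin m) = j then w i • v j else 0) := Finset.sum_comm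
      _ = ∑ i ∈ s, w i • v i := Finset.sum_congr rfl fun i _ => by simp
      _ = 0 := hw1
  · intro hW
    apply hwe
    have := congrFun hW (e : Fin m)
    simp only [Pi.zero_apply] at this
    simpa [Subtype.coe_inj, Finset.sum_ite_eq', hes] using this

end aux

/-- An `A`-ridge contains a unique circuit: if `v : Fin (n+2) → ℝ^n` is such that the
subfamily omitting the last index and the subfamily omitting index `0` are both affinely
independent, then there is exactly one subset `Z` of the index set whose subfamily is
affinely dependent while every proper subset indexes an affinely independent subfamily. -/
theorem ridge_unique_circuit (n : ℕ) (hn : 1 ≤ n) (v : Fin (n + 2) → (Fin n → ℝ))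
    (hs : AffineIndependent ℝ (fun i : {j : Fin (n + 2) // j ≠ Fin.last (n + 1)} => v i))
    (ht : AffineIndependent ℝ (fun i : {j : Fin (n + 2) // j ≠ 0} => v i)) :
    ∃! Z : Set (Fin (n + 2)),
      (¬ AffineIndependent ℝ (fun i : Z => v i)) ∧
      ∀ Z' : Set (Fin (n + 2)), Z' ⊂ Z → AffineIndependent ℝ (fun i : Z' => v i) := by
  classical
  -- the whole family is affinely dependent
  have hdep : ¬ AffineIndependent ℝ (fun i : (Set.univ : Set (Fin (n+2))) => v i) := by
    intro hAI
    have hAI' : AffineIndependent ℝ v :=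
      (affineIndependent_equiv (Equiv.Set.univ (Fin (n+2)))).1 hAI
    have hcard := hAI'.card_le_finrank_succ
    have hle : Module.finrank ℝ (vectorSpan ℝ (Set.range v)) ≤ n := by
      have h1 := Submodule.finrank_le (vectorSpan ℝ (Set.range v))
      simpa [Module.finrank_fin_fun] using h1
    simp only [Fintype.card_fin] at hcard
    omega
  obtain ⟨W, -, hW0, hW1, hWne⟩ := aux_dep_weights Set.univ hdep
  -- any dependency vanishing at the last index is zero
  have hlast : ∀ W' : Fin (n+2) → ℝ, (∑ j, W' j = 0) → (∑ j, W' j • v j = 0) →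
      W' (Fin.last (n+1)) = 0 → W' = 0 := by
    intro W' a b c
    exact aux_indep_zero hs W' (fun j hj => by rw [not_not.1 hj]; exact c) a b
  have hzero : ∀ W' : Fin (n+2) → ℝ, (∑ j, W' j = 0) → (∑ j, W' j • v j = 0) →
      W' 0 = 0 → W' = 0 := by
    intro W' a b c
    exact aux_indep_zero ht W' (fun j hj => by rw [not_not.1 hj]; exact c) a b
  have hWlast : W (Fin.last (n+1)) ≠ 0 := fun h => hWne (hlast W hW0 hW1 h)
  -- any nonzero dependency has the same support as `W`
  have hprop : ∀ W' : Fin (n+2) → ℝ, (∑ j, W' j = 0) → (∑ j, W' j • v j = 0) →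
      W' ≠ 0 → ∀ j, (W' j ≠ 0 ↔ W j ≠ 0) := by
    intro W' a b hne j
    have hl' : W' (Fin.last (n+1)) ≠ 0 := fun h => hne (hlast W' a b h)
    set U : Fin (n+2) → ℝ := fun j => W (Fin.last (n+1)) * W' j - W' (Fin.last (n+1)) * W j
      with hU
    have hU0 : U = 0 := by
      apply hlast
      · simp only [hU, Finset.sum_sub_distrib, ← Finset.mul_sum, hW0, a, mul_zero, sub_zero]
      · simp only [hU, sub_smul, mul_smul, Finset.sum_sub_distrib, ← Finset.smul_sum, hW1, b,
          smul_zero, sub_zero]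
      · simp [hU, mul_comm]
    have hUj : W (Fin.last (n+1)) * W' j = W' (Fin.last (n+1)) * W j := by
      have := congrFun hU0 j
      simpa [hU, sub_eq_zero] using this
    constructor
    · intro h hWj
      rw [hWj, mul_zero] at hUj
      exact h ((mul_eq_zero.1 hUj).resolve_left hWlast)
    · intro h hW'j
      rw [hW'j, mul_zero] at hUj
      exact h ((mul_eq_zero.1 hUj.symm).resolve_left hl')
  set Z : Set (Fin (n+2)) := {j | W j ≠ 0} with hZdef
  have hZdep : ¬ AffineIndependent ℝ (fun i : Z => v i) := by
    intro hAI
    exact hWne (aux_indep_zero hAI W (fun j hj => not_not.1 hj) hW0 hW1)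
  refine ⟨Z, ⟨hZdep, ?_⟩, ?_⟩
  · -- minimality
    intro Z' hZ'
    by_contra hdep'
    obtain ⟨W', hsupp', a', b', hne'⟩ := aux_dep_weights Z' hdep'
    obtain ⟨j, hjZ, hjZ'⟩ := Set.exists_of_ssubset hZ'
    exact ((hprop W' a' b' hne' j).2 hjZ) (hsupp' j hjZ')
  · -- uniqueness
    rintro Z₂ ⟨hdep₂, hmin₂⟩
    obtain ⟨W₂, hsupp₂, a₂, b₂, hne₂⟩ := aux_dep_weights Z₂ hdep₂
    have hsub : Z ⊆ Z₂ := by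
      intro j hj
      by_contra hj₂
      exact ((hprop W₂ a₂ b₂ hne₂ j).2 hj) (hsupp₂ j hj₂)
    by_contra hne
    exact hZdep (hmin₂ Z (hsub.ssubset_of_ne (Ne.symm hne)))
end

section
/- Let n ≥ 1 and let v : Fin(n+2) → ℝ^n be a family of points such that the subfamily of v indexed by {0, 1, …, n} (omitting the last index) is affinely independent and the subfamily indexed by {1, …, n+1} (omitting index 0) is affinely independent, and let Z ⊆ Fin(n+2) be the unique circuit of v. For each i ∈ Fin(n+2), let A_i be the (n+1)×(n+1) real matrix whose rows, indexed by the n+1 elements j of Fin(n+2) \ {i} taken in increasing order, are the vectors (1, v(j)_1, v(j)_2, …, v(j)_n). Then Z = {i ∈ Fin(n+2) : det(A_i) ≠ 0}. -/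
/-- For `i : Fin (n+2)`, the `(n+1)×(n+1)` matrix whose rows, indexed by the elements of
`Fin (n+2) \ {i}` in increasing order (via `Fin.succAbove`), are `(1, v(j)_1, …, v(j)_n)`. -/
def ridgeMatrix {n : ℕ} (v : Fin (n + 2) → (Fin n → ℝ)) (i : Fin (n + 2)) :
    Matrix (Fin (n + 1)) (Fin (n + 1)) ℝ :=
  Matrix.of fun r c => (Fin.cons (1 : ℝ) (v (i.succAbove r)) : Fin (n + 1) → ℝ) c

private lemma sum_subtype_eq_sum' {α β : Type*} [Fintype α] [AddCommMonoid β]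
    (p : α → Prop) [DecidablePred p] [Fintype (Subtype p)] (f : α → β)
    (h : ∀ i, ¬ p i → f i = 0) :
    ∑ i : Subtype p, f (i : α) = ∑ i, f i := by
  rw [← Finset.sum_subtype (Finset.univ.filter p) (fun x => by simp) f]
  exact Finset.sum_subset (Finset.filter_subset _ _) fun x _ hx => h x (by simpa using hx)

private def bigMat {n : ℕ} (v : Fin (n + 2) → (Fin n → ℝ)) (u : Fin (n + 2) → ℝ) :
    Matrix (Fin (n + 2)) (Fin (n + 2)) ℝ :=
  Matrix.of fun r => Fin.cons (u r) (Fin.cons (1 : ℝ) (v r))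

private lemma laplace {n : ℕ} (v : Fin (n + 2) → (Fin n → ℝ)) (u : Fin (n + 2) → ℝ) :
    ∑ i : Fin (n + 2), (-1 : ℝ) ^ (i : ℕ) * u i * (ridgeMatrix v i).det
      = (bigMat v u).det := by
  rw [Matrix.det_succ_column_zero]
  refine Finset.sum_congr rfl fun i _ => ?_
  have h0 : bigMat v u i 0 = u i := rfl
  have h1 : (bigMat v u).submatrix i.succAbove Fin.succ = ridgeMatrix v i := by
    ext r c
    simp [ridgeMatrix, bigMat, Matrix.submatrix_apply]
  rw [h0, h1]

/-- The fundamental circuit of an `A`-ridge equals the set of indices `i` for which the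
determinant of the matrix omitting the `i`-th point is nonzero, i.e. the support of the
edge-length linear form. -/
theorem circuit_eq_det_support (n : ℕ) (hn : 1 ≤ n) (v : Fin (n + 2) → (Fin n → ℝ))
    (hs : AffineIndependent ℝ (fun i : {j : Fin (n + 2) // j ≠ Fin.last (n + 1)} => v i))
    (ht : AffineIndependent ℝ (fun i : {j : Fin (n + 2) // j ≠ 0} => v i))
    (Z : Set (Fin (n + 2)))
    (hZdep : ¬ AffineIndependent ℝ (fun i : Z => v i))
    (hZmin : ∀ Z' : Set (Fin (n + 2)), Z' ⊂ Z →
      AffineIndependent ℝ (fun i : Z' => v i)) :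
    Z = {i : Fin (n + 2) | (ridgeMatrix v i).det ≠ 0} := by
  classical
  set w : Fin (n + 2) → ℝ := fun i => (-1 : ℝ) ^ (i : ℕ) * (ridgeMatrix v i).det with hw_def
  -- w is an affine dependence
  have hw_sum : ∑ i, w i = 0 := by
    have h := laplace v (fun _ => 1)
    simp only [mul_one] at h
    simp only [hw_def]
    rw [h]
    refine Matrix.det_zero_of_column_eq (i := 0) (j := 1) (by simp) fun k => ?_
    have h1 : (1 : Fin (n + 2)) = Fin.succ 0 := by simp
    rw [h1]
    simp [bigMat]
  have hw_comb : ∑ i, w i • v i = 0 := by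
    funext k
    have h := laplace v (fun r => v r k)
    have h2 : ∑ i : Fin (n + 2), w i * v i k
        = ∑ i : Fin (n + 2), (-1 : ℝ) ^ (i : ℕ) * v i k * (ridgeMatrix v i).det := by
      refine Finset.sum_congr rfl fun i _ => ?_
      simp only [hw_def]; ring
    have h3 : (bigMat v (fun r => v r k)).det = 0 := by
      refine Matrix.det_zero_of_column_eq (i := 0) (j := (k.succ).succ)
        (Ne.symm (Fin.succ_ne_zero _)) fun r => ?_
      simp [bigMat]
    simp only [Finset.sum_apply, Pi.smul_apply, smul_eq_mul, Pi.zero_apply]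
    rw [h2, h]
    exact h3
  -- key : dependences vanishing at `last` vanish
  have key : ∀ u : Fin (n + 2) → ℝ, (∑ i, u i) = 0 → (∑ i, u i • v i) = 0 →
      u (Fin.last (n + 1)) = 0 → u = 0 := by
    intro u h1 h2 h3
    have hs' := (affineIndependent_iff_of_fintype ℝ
      (fun i : {j : Fin (n + 2) // j ≠ Fin.last (n + 1)} => v i)).mp hs
    have e1 : ∑ i : {j : Fin (n + 2) // j ≠ Fin.last (n + 1)}, u (i : Fin (n + 2)) = 0 := by
      exact (sum_subtype_eq_sum' (fun j => j ≠ Fin.last (n + 1)) u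
        (fun i hi => by rw [not_not] at hi; rw [hi]; exact h3)).trans h1
    have e2 : Finset.univ.weightedVSub (fun i : {j : Fin (n + 2) // j ≠ Fin.last (n + 1)} => v i)
        (fun i => u (i : Fin (n + 2))) = (0 : Fin n → ℝ) := by
      rw [Finset.weightedVSub_eq_linear_combination _ e1]
      exact (sum_subtype_eq_sum' (fun j => j ≠ Fin.last (n + 1)) (fun i => u i • v i)
        (fun i hi => by simp only [not_not] at hi; simp only [hi, h3, zero_smul])).trans h2
    have hall := hs' _ e1 e2
    funext i
    by_cases hi : i = Fin.last (n + 1)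
    · rw [hi]; exact h3
    · exact hall ⟨i, hi⟩
  -- w last ≠ 0
  have hw_last : w (Fin.last (n + 1)) ≠ 0 := by
    simp only [hw_def]
    refine mul_ne_zero (by positivity) ?_
    intro hdet0
    obtain ⟨g, hg0, hgz⟩ := Matrix.exists_vecMul_eq_zero_iff.mpr hdet0
    set u : Fin (n + 2) → ℝ :=
      fun i => if h : i = Fin.last (n + 1) then 0 else g (i.castPred h) with hu_def
    have hu_cast : ∀ r : Fin (n + 1), u r.castSucc = g r := by
      intro r
      simp only [hu_def]
      rw [dif_neg (Fin.castSucc_lt_last r).ne]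
      rw [Fin.castPred_castSucc]
    have hu_last : u (Fin.last (n + 1)) = 0 := by simp [hu_def]
    have hcol : ∀ c, ∑ r, g r * (ridgeMatrix v (Fin.last (n + 1))) r c = 0 := by
      intro c
      have := congrFun hgz c
      simpa [Matrix.vecMul, dotProduct] using this
    have hrow : ∀ r c, (ridgeMatrix v (Fin.last (n + 1))) r c
        = (Fin.cons (1 : ℝ) (v r.castSucc) : Fin (n + 1) → ℝ) c := by
      intro r c
      simp [ridgeMatrix, Fin.succAbove_last]
    have h1 : ∑ i, u i = 0 := by
      rw [Fin.sum_univ_castSucc]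
      rw [hu_last, add_zero]
      have := hcol 0
      simp only [hrow, Fin.cons_zero, mul_one] at this
      simpa [hu_cast] using this
    have h2 : ∑ i, u i • v i = 0 := by
      funext k
      rw [Finset.sum_apply]
      simp only [Pi.smul_apply, smul_eq_mul, Pi.zero_apply]
      rw [Fin.sum_univ_castSucc]
      rw [hu_last, zero_mul, add_zero]
      have := hcol k.succ
      simp only [hrow, Fin.cons_succ] at this
      simpa [hu_cast] using this
    have hu0 := key u h1 h2 hu_last
    apply hg0
    funext r
    have := congrFun hu0 r.castSucc
    rwa [hu_cast] at this
  -- every dependence is a multiple of w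
  have hmult : ∀ u : Fin (n + 2) → ℝ, (∑ i, u i) = 0 → (∑ i, u i • v i) = 0 →
      u = (u (Fin.last (n + 1)) / w (Fin.last (n + 1))) • w := by
    intro u h1 h2
    set c := u (Fin.last (n + 1)) / w (Fin.last (n + 1)) with hc
    have hz := key (u - c • w) ?_ ?_ ?_
    · rw [sub_eq_zero] at hz; exact hz
    · simp only [Pi.sub_apply, Pi.smul_apply, smul_eq_mul, Finset.sum_sub_distrib,
        ← Finset.mul_sum, hw_sum, h1, mul_zero, sub_zero]
    · have h4 : ∑ i, ((u - c • w) i) • v i = (∑ i, u i • v i) - c • ∑ i, w i • v i := by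
        rw [Finset.smul_sum, ← Finset.sum_sub_distrib]
        refine Finset.sum_congr rfl fun i _ => ?_
        simp [sub_smul, smul_smul]
      rw [h4, h2, hw_comb, smul_zero, sub_zero]
    · simp only [Pi.sub_apply, Pi.smul_apply, smul_eq_mul, hc]
      rw [div_mul_cancel₀ _ hw_last, sub_self]
  -- support of w
  set S : Set (Fin (n + 2)) := {i | w i ≠ 0} with hS_def
  -- S ⊆ Z
  have hSZ : S ⊆ Z := by
    rw [affineIndependent_iff_of_fintype] at hZdep
    push_neg at hZdep
    obtain ⟨u0, hu1, hu2, i0, hi0⟩ := hZdep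
    set uext : Fin (n + 2) → ℝ := fun i => if h : i ∈ Z then u0 ⟨i, h⟩ else 0 with huext
    have hrest : ∀ i : Z, uext (i : Fin (n + 2)) = u0 i := by
      intro i; simp only [huext]; rw [dif_pos i.2]
    have hz1 : ∑ i, uext i = 0 := by
      refine ((sum_subtype_eq_sum' (fun j => j ∈ Z) uext
        (fun i hi => by simp only [huext]; exact dif_neg hi)).symm).trans ?_
      exact (Finset.sum_congr rfl fun i _ => hrest i).trans hu1
    have hz2 : ∑ i, uext i • v i = 0 := by
      rw [Finset.weightedVSub_eq_linear_combination _ hu1] at hu2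
      refine ((sum_subtype_eq_sum' (fun j => j ∈ Z) (fun i => uext i • v i)
        (fun i hi => by simp only [huext]; rw [dif_neg hi, zero_smul])).symm).trans ?_
      exact (Finset.sum_congr rfl fun i _ => by rw [hrest i]).trans hu2
    have hmu := hmult uext hz1 hz2
    have hcne : uext (Fin.last (n + 1)) / w (Fin.last (n + 1)) ≠ 0 := by
      intro hc0
      rw [hc0, zero_smul] at hmu
      apply hi0
      rw [← hrest i0, hmu]
      rfl
    intro i hi
    by_contra hiZ
    have h5 : uext i = 0 := by simp only [huext]; exact dif_neg hiZ
    rw [hmu] at h5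
    simp only [Pi.smul_apply, smul_eq_mul] at h5
    rcases mul_eq_zero.mp h5 with h | h
    · exact hcne h
    · exact hi h
  -- S is affinely dependent
  have hSdep : ¬ AffineIndependent ℝ (fun i : S => v i) := by
    intro hind
    have hind' := (affineIndependent_iff_of_fintype ℝ (fun i : S => v i)).mp hind
    have e1 : ∑ i : S, w (i : Fin (n + 2)) = 0 := by
      exact (sum_subtype_eq_sum' (fun j => j ∈ S) w (fun i hi => by
        simp only [hS_def, Set.mem_setOf_eq, not_not] at hi; exact hi)).trans hw_sum
    have e2 : Finset.univ.weightedVSub (fun i : S => v i)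
        (fun i : S => w (i : Fin (n + 2))) = (0 : Fin n → ℝ) := by
      rw [Finset.weightedVSub_eq_linear_combination _ e1]
      exact (sum_subtype_eq_sum' (fun j => j ∈ S) (fun i => w i • v i) (fun i hi => by
        simp only [hS_def, Set.mem_setOf_eq, not_not] at hi
        simp only [hi, zero_smul])).trans hw_comb
    have := hind' _ e1 e2 ⟨Fin.last (n + 1), hw_last⟩
    exact hw_last this
  -- conclude
  have hZS : Z = S := by
    by_contra hne
    exact hSdep (hZmin S ⟨hSZ, fun h => hne (Set.Subset.antisymm h hSZ)⟩)
  rw [hZS]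
  ext i
  simp only [hS_def, Set.mem_setOf_eq, hw_def]
  constructor
  · intro h hd; exact h (by rw [hd, mul_zero])
  · intro h hm; exact h ((mul_eq_zero.mp hm).resolve_left (by positivity))
end

section
/- Let M be a finite matroid on ground set E and let C ⊆ E be a circuit of M (a minimal dependent set) with at least two elements. Then there exist bases s and t of M and elements a, b ∈ E with a ≠ b, a ∉ t, b ∈ t, s = (t \ {b}) ∪ {a}, and C ⊆ s ∪ t; moreover, C is the unique circuit of M contained in s ∪ t. -/
/-
A circuit `C` with two elements `a ≠ b` is the fundamental circuit of `a` in any base `t`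
extending the independent set `C \ {a}`. Since `b` lies in that fundamental circuit, exchanging
`b` for `a` in `t` gives a second base `s`, and `s ∪ t = insert a t` contains only one circuit.
-/

variable {α : Type*}

/-- A circuit of a matroid: a minimal dependent set. -/
def IsCircuit (M : Matroid α) (C : Set α) : Prop :=
  M.Dep C ∧ ∀ D : Set α, D ⊂ C → M.Indep D

open Set

lemma isCircuit_iff_matroid_isCircuit {M : Matroid α} {C : Set α} :
    IsCircuit M C ↔ M.IsCircuit C := by
  rw [Matroid.isCircuit_iff_forall_ssubset]
  rfl

namespace Matroid

variable {M : Matroid α} {C t : Set α} {a b : α}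

lemma IsCircuit.exists_isBase_eq_fundCircuit (hC : M.IsCircuit C) (ha : a ∈ C) :
    ∃ t, M.IsBase t ∧ a ∉ t ∧ C \ {a} ⊆ t ∧ C = M.fundCircuit a t := by
  obtain ⟨t, ht, hCt⟩ := (hC.sdiff_singleton_indep ha).exists_isBase_superset
  have hC_sub : C ⊆ insert a t :=
    (subset_insert_sdiff_singleton a C).trans (insert_subset_insert hCt)
  have hat : a ∉ t := fun hat ↦
    hC.not_indep (ht.indep.subset (hC_sub.trans (insert_eq_of_mem hat).subset))
  exact ⟨t, ht, hat, hCt, hC.eq_fundCircuit_of_subset ht.indep hC_sub⟩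

lemma IsBase.exchange_isBase_of_mem_fundCircuit (ht : M.IsBase t) (ha : a ∈ M.E)
    (hat : a ∉ t) (hbt : b ∈ t) (hb : b ∈ M.fundCircuit a t) :
    M.IsBase (insert a (t \ {b})) := by
  have hab : a ≠ b := ne_of_mem_of_not_mem hbt hat |>.symm
  refine ht.exchange_isBase_of_indep hat ?_
  rw [insert_sdiff_singleton_comm hab]
  exact (ht.indep.mem_fundCircuit_iff (by rwa [ht.closure_eq]) hat).1 hb

end Matroid

theorem circuit_eq_fundamental_circuit_of_ridge_general (M : Matroid α)
    (C : Set α) (hC : IsCircuit M C) (hcard : 2 ≤ C.ncard) :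
    ∃ s t : Set α, ∃ a b : α, M.IsBase s ∧ M.IsBase t ∧ a ≠ b ∧ a ∉ t ∧ b ∈ t ∧
      s = insert a (t \ {b}) ∧ C ⊆ s ∪ t ∧
      ∀ C' : Set α, C' ⊆ s ∪ t → IsCircuit M C' → C' = C := by
  rw [isCircuit_iff_matroid_isCircuit] at hC
  obtain ⟨a, b, haC, hbC, hab⟩ := (one_lt_ncard_iff (finite_of_ncard_pos (by omega))).1 hcard
  have haE : a ∈ M.E := hC.subset_ground haC
  obtain ⟨t, ht, hat, hCt, rfl⟩ := hC.exists_isBase_eq_fundCircuit haC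
  have hbt : b ∈ t := hCt ⟨hbC, hab.symm⟩
  have hst : insert a (t \ {b}) ∪ t = insert a t := by
    rw [insert_union, union_eq_self_of_subset_left sdiff_subset]
  refine ⟨_, t, a, b, ht.exchange_isBase_of_mem_fundCircuit haE hat hbt hbC, ht, hab, hat, hbt,
    rfl, hst ▸ M.fundCircuit_subset_insert a t, fun C' hC's hC' ↦ ?_⟩
  rw [hst] at hC's
  exact (isCircuit_iff_matroid_isCircuit.1 hC').eq_fundCircuit_of_subset ht.indep hC's

/-- Every circuit `C` of a finite matroid with at least two elements is the unique
circuit contained in the union `s ∪ t` of two adjacent bases `s = (t \ {b}) ∪ {a}`. -/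
theorem circuit_eq_fundamental_circuit_of_ridge (M : Matroid α) [M.Finite]
    (C : Set α) (hC : IsCircuit M C) (hcard : 2 ≤ C.ncard) :
    ∃ s t : Set α, ∃ a b : α, M.IsBase s ∧ M.IsBase t ∧ a ≠ b ∧ a ∉ t ∧ b ∈ t ∧
      s = insert a (t \ {b}) ∧ C ⊆ s ∪ t ∧
      ∀ C' : Set α, C' ⊆ s ∪ t → IsCircuit M C' → C' = C :=
  circuit_eq_fundamental_circuit_of_ridge_general M C hC hcard
end

section
/- Let M be a finite matroid on ground set E and let w : E → ℝ be a weight function. Suppose B and B' are bases of M, each of minimum total weight, i.e. for every base B'' of M one has Σ_{e ∈ B} w(e) ≤ Σ_{e ∈ B''} w(e) and Σ_{e ∈ B'} w(e) ≤ Σ_{e ∈ B''} w(e). If e ∈ B satisfies w(e) ≠ w(f) for every f ∈ E with f ≠ e, then e ∈ B'. -/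
open Set

lemma finsum_mem_eq_add_diff {α : Type*} (w : α → ℝ) {S : Set α} (hS : S.Finite) {a : α}
    (haS : a ∈ S) : ∑ᶠ x ∈ S, w x = w a + ∑ᶠ x ∈ S \ {a}, w x := by
  classical
  have h1 : ∑ᶠ x ∈ S, w x = ∑ x ∈ hS.toFinset, w x := by
    rw [← finsum_mem_coe_finset]; simp
  have h2 : ∑ᶠ x ∈ S \ {a}, w x = ∑ x ∈ hS.toFinset.erase a, w x := by
    rw [← finsum_mem_coe_finset]
    congr 1
    ext x
    simp [Set.diff_eq, and_comm]
  rw [h1, h2, ← Finset.add_sum_erase _ w (by simpa using haS)]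

/-- In a finite matroid, if `B` and `B'` are both minimum-weight bases with respect to a
weight function `w`, then every element of `B` whose weight is distinct from the weight of
all other elements of the ground set (a "stable" element) also belongs to `B'`. -/
theorem stable_mem_of_min_weight_bases {α : Type*} (M : Matroid α) [M.Finite]
    (w : α → ℝ) (B B' : Set α) (hB : M.IsBase B) (hB' : M.IsBase B')
    (hmin : ∀ B'' : Set α, M.IsBase B'' → ∑ᶠ e ∈ B, w e ≤ ∑ᶠ e ∈ B'', w e)
    (hmin' : ∀ B'' : Set α, M.IsBase B'' → ∑ᶠ e ∈ B', w e ≤ ∑ᶠ e ∈ B'', w e)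
    (e : α) (he : e ∈ B) (hstable : ∀ f ∈ M.E, f ≠ e → w e ≠ w f) :
    e ∈ B' := by
  by_contra heB'
  have heE : e ∈ M.E := hB.subset_ground he
  have hBfin : B.Finite := M.set_finite B hB.subset_ground
  have hB'fin : B'.Finite := M.set_finite B' hB'.subset_ground
  -- a minimal subset `I` of `B'` whose closure contains `e`
  set F : Set (Set α) := {I | I ⊆ B' ∧ e ∈ M.closure I} with hF
  have hFfin : F.Finite := hB'fin.finite_subsets.subset (fun I hI => hI.1)
  have hB'F : B' ∈ F := ⟨subset_rfl, by rw [hB'.closure_eq]; exact heE⟩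
  obtain ⟨I, hIF, hImin⟩ : ∃ I ∈ F, ∀ I' ∈ F, id I' ≤ id I → id I = id I' := by
    obtain ⟨I, hI⟩ := hFfin.exists_minimal ⟨B', hB'F⟩
    exact ⟨I, hI.1, fun I' hI' hle => (hI.eq_of_subset hI' hle).symm⟩
  -- `e` is not in the closure of `B \ {e}`
  have heK : e ∉ M.closure (B \ {e}) := hB.indep.notMem_closure_diff_of_mem he
  -- pick `f ∈ I` outside the closure of `B \ {e}`
  have hns : ¬ I ⊆ M.closure (B \ {e}) := fun hsub =>
    heK (Matroid.closure_subset_closure_of_subset_closure hsub hIF.2)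
  obtain ⟨f, hfI, hfK⟩ := not_subset.mp hns
  have hfB' : f ∈ B' := hIF.1 hfI
  have hfE : f ∈ M.E := hB'.subset_ground hfB'
  have hfne : f ≠ e := fun h => heB' (h ▸ hfB')
  have hfB : f ∉ B := fun hfB =>
    hfK (M.subset_closure (B \ {e}) (diff_subset.trans hB.subset_ground) ⟨hfB, hfne⟩)
  -- minimality of `I` : `e ∉ closure (I \ {f})`
  have hIf : e ∉ M.closure (I \ {f}) := by
    intro hcon
    have hmem : I \ {f} ∈ F := ⟨diff_subset.trans hIF.1, hcon⟩
    have := hImin _ hmem diff_subset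
    simp only [id] at this
    exact (this ▸ hfI).2 rfl
  -- closure exchange gives `f ∈ closure (insert e (I \ {f}))`
  have hex : f ∈ M.closure (insert e (I \ {f})) \ M.closure (I \ {f}) :=
    Matroid.closure_exchange ⟨by rw [insert_diff_singleton, insert_eq_of_mem hfI]; exact hIF.2, hIf⟩
  -- so `e ∉ closure (B' \ {f})`
  have heB'f : e ∉ M.closure (B' \ {f}) := by
    intro hcon
    have h1 : f ∈ M.closure (insert e (B' \ {f})) :=
      M.closure_subset_closure (insert_subset_insert (diff_subset_diff_left hIF.1)) hex.1
    rw [Matroid.closure_insert_eq_of_mem_closure hcon] at h1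
    exact hB'.indep.notMem_closure_diff_of_mem hfB' h1
  -- the two exchanged bases
  have hbase1 : M.IsBase (insert f (B \ {e})) :=
    hB.exchange_isBase_of_indep hfB
      (((hB.indep.diff {e}).insert_indep_iff_of_notMem (fun h => hfB h.1)).mpr ⟨hfE, hfK⟩)
  have hbase2 : M.IsBase (insert e (B' \ {f})) :=
    hB'.exchange_isBase_of_indep heB'
      (((hB'.indep.diff {f}).insert_indep_iff_of_notMem (fun h => heB' h.1)).mpr ⟨heE, heB'f⟩)
  -- weight comparisons
  have hsum1 : ∑ᶠ x ∈ insert f (B \ {e}), w x = w f + ∑ᶠ x ∈ B \ {e}, w x := by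
    rw [finsum_mem_eq_add_diff w ((hBfin.diff (t := {e})).insert f) (mem_insert f _)]
    congr 1
    rw [insert_diff_self_of_notMem (fun h => hfB h.1)]
  have hsum2 : ∑ᶠ x ∈ insert e (B' \ {f}), w x = w e + ∑ᶠ x ∈ B' \ {f}, w x := by
    rw [finsum_mem_eq_add_diff w ((hB'fin.diff (t := {f})).insert e) (mem_insert e _)]
    congr 1
    rw [insert_diff_self_of_notMem (fun h => heB' h.1)]
  have hsB : ∑ᶠ x ∈ B, w x = w e + ∑ᶠ x ∈ B \ {e}, w x := finsum_mem_eq_add_diff w hBfin he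
  have hsB' : ∑ᶠ x ∈ B', w x = w f + ∑ᶠ x ∈ B' \ {f}, w x := finsum_mem_eq_add_diff w hB'fin hfB'
  have h1 := hmin _ hbase1
  have h2 := hmin' _ hbase2
  rw [hsum1, hsB] at h1
  rw [hsum2, hsB'] at h2
  have : w e = w f := le_antisymm (by linarith) (by linarith)
  exact hstable f hfE hfne this
end
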